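/- arXiv:2203.17167 — 2 statements merged into one kernel-verified Lean document; each statement's English description precedes it below -/
import Mathlib

section
/- Let G be a directed graph whose edges are colored red or blue, where red edges come in pairs (both directions). Define platforms as the connected components of the subgraph of red edges. Suppose each blue edge (u,v) has the property that it is 'available' at any moment when the platform containing v has not yet been visited (i.e., blue edges into never-visited platforms are always traversable, while blue edges into visited platforms may be blocked), and red edges are always traversable. Then if there exists a walk from vertex s to vertex t respecting availability, there exists such a walk that visits each platform at most once. -/
/-- Platforms: equivalence classes of the reflexive-symmetric-transitive closure
of the red-edge relation. -/
def plat {V : Type*} (red : V → V → Prop) : V → V → Prop := Relation.EqvGen red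

/-- A walk where each step is a red edge (always traversable) or a blue edge,
the latter subject to an availability predicate depending on the history
(the prefix of vertices visited so far). -/
def IsWalk {V : Type*} (red blue : V → V → Prop)
    (avail : List V → V → V → Prop) (w : List V) : Prop :=
  ∀ i : ℕ, ∀ h : i + 1 < w.length,
    red (w[i]'(Nat.lt_of_succ_lt h)) (w[i+1]'h) ∨
      (blue (w[i]'(Nat.lt_of_succ_lt h)) (w[i+1]'h) ∧
        avail (w.take (i+1)) (w[i]'(Nat.lt_of_succ_lt h)) (w[i+1]'h))

/-- The walk visits each platform at most once: it never leaves a platform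
and later returns to it. -/
def VisitsPlatformsOnce {V : Type*} (red : V → V → Prop) (w : List V) : Prop :=
  ∀ i j k : ℕ, ∀ hij : i ≤ j, ∀ hjk : j ≤ k, ∀ h : k < w.length,
    plat red (w[i]'(lt_of_le_of_lt (le_trans hij hjk) h)) (w[k]'h) →
    plat red (w[i]'(lt_of_le_of_lt (le_trans hij hjk) h))
      (w[j]'(lt_of_le_of_lt hjk h))

namespace Stmt0Aux

variable {V : Type*}

lemma plat_refl (red : V → V → Prop) (a : V) : plat red a a := Relation.EqvGen.refl a

lemma plat_symm {red : V → V → Prop} {a b : V} (h : plat red a b) : plat red b a :=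
  Relation.EqvGen.symm _ _ h

lemma plat_trans {red : V → V → Prop} {a b c : V} (h : plat red a b) (h' : plat red b c) :
    plat red a c := Relation.EqvGen.trans _ _ _ h h'

lemma exists_red_path {red : V → V → Prop} (hsymm : Symmetric red) {a b : V}
    (h : plat red a b) :
    ∃ l : List V, l ≠ [] ∧ l.head? = some a ∧ l.getLast? = some b ∧
      l.Chain' red ∧ ∀ x ∈ l, plat red a x := by
  induction h with
  | rel x y hxy =>
      refine ⟨[x, y], by simp, rfl, rfl, by simp [List.Chain', hxy], ?_⟩
      intro z hz
      rcases List.mem_pair.mp hz with rfl | rfl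
      · exact plat_refl red z
      · exact Relation.EqvGen.rel _ _ hxy
  | refl x =>
      exact ⟨[x], by simp, rfl, rfl, by simp [List.Chain'], by
        intro z hz; simp at hz; subst hz; exact plat_refl red z⟩
  | symm x y hxy ih =>
      obtain ⟨l, hne, hh, hl, hc, hm⟩ := ih
      have hxy' : plat red x y := hxy
      refine ⟨l.reverse, by simpa using hne, ?_, ?_, ?_, ?_⟩
      · rw [List.head?_reverse]; exact hl
      · rw [List.getLast?_reverse]; exact hh
      · show List.IsChain _ _; rw [List.isChain_reverse]; exact List.IsChain.imp (fun _ _ hr => hsymm hr) hc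
      · intro z hz
        rw [List.mem_reverse] at hz
        exact plat_trans (plat_symm hxy') (hm z hz)
  | trans x y z hxy hyz ih1 ih2 =>
      obtain ⟨l1, hne1, hh1, hl1, hc1, hm1⟩ := ih1
      obtain ⟨l2, hne2, hh2, hl2, hc2, hm2⟩ := ih2
      have hxy' : plat red x y := hxy
      obtain ⟨b, t, rfl⟩ := List.exists_cons_of_ne_nil hne2
      have hb : b = y := by simpa using hh2
      subst hb
      cases t with
      | nil =>
          have hz : b = z := by simpa using hl2
          subst hz
          exact ⟨l1, hne1, hh1, hl1, hc1, hm1⟩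
      | cons c t' =>
          have hyc : red b c := (List.isChain_cons_cons.mp hc2).1
          have hc2' : List.Chain' red (c :: t') := (List.isChain_cons_cons.mp hc2).2
          refine ⟨l1 ++ (c :: t'), by simp, ?_, ?_, ?_, ?_⟩
          · rw [List.head?_append_of_ne_nil _ hne1]; exact hh1
          · rw [List.getLast?_append]
            rw [List.getLast?_cons_cons] at hl2
            simp [hl2]
          · show List.IsChain _ _; rw [List.isChain_append]
            refine ⟨hc1, hc2', ?_⟩
            intro p hp q hq
            rw [hl1] at hp
            simp at hp hq
            subst hp; subst hq; exact hyc
          · intro p hp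
            rcases List.mem_append.mp hp with hp | hp
            · exact hm1 p hp
            · exact plat_trans hxy' (hm2 p (List.mem_cons_of_mem _ hp))

/-- Edge relation: each step is a red or blue edge. -/
def Edges (red blue : V → V → Prop) (w : List V) : Prop :=
  ∀ i : ℕ, ∀ h : i + 1 < w.length,
    red (w[i]'(Nat.lt_of_succ_lt h)) (w[i+1]'h) ∨
      blue (w[i]'(Nat.lt_of_succ_lt h)) (w[i+1]'h)

/-- A good walk: each step red, or blue into a platform not yet visited. -/
def Good (red blue : V → V → Prop) (w : List V) : Prop :=
  ∀ i : ℕ, ∀ h : i + 1 < w.length,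
    red (w[i]'(Nat.lt_of_succ_lt h)) (w[i+1]'h) ∨
      (blue (w[i]'(Nat.lt_of_succ_lt h)) (w[i+1]'h) ∧
        ∀ x ∈ w.take (i+1), ¬ plat red x (w[i+1]'h))

lemma getElem_idx_congr (l : List V) {i j : ℕ} (h : i = j) (hi : i < l.length) :
    l[i]'hi = l[j]'(h ▸ hi) := by subst h; rfl

lemma chain'_getElem {R : V → V → Prop} {l : List V} (hc : l.Chain' R)
    (i : ℕ) (h : i + 1 < l.length) :
    R (l[i]'(Nat.lt_of_succ_lt h)) (l[i+1]'h) := by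
  have := List.isChain_iff_getElem.mp hc i (by omega)
  simpa using this

lemma key (red blue : V → V → Prop) (hsymm : Symmetric red) :
    ∀ n (w : List V), w.length ≤ n → ∀ hne : w ≠ [],
      Edges red blue w →
      ∃ (w' : List V) (hne' : w' ≠ []),
        w'.head hne' = w.head hne ∧ w'.getLast hne' = w.getLast hne ∧
        (∀ x ∈ w', ∃ y ∈ w, plat red x y) ∧
        Good red blue w' ∧ VisitsPlatformsOnce red w' := by
  intro n
  induction n with
  | zero =>
      intro w hw hne _
      exact absurd (List.length_pos_iff.mpr hne) (by omega)
  | succ n ih =>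
    intro w hw hne hE
    classical
    set s := w.head hne with hs
    have hlen : 0 < w.length := List.length_pos_iff.mpr hne
    have h0 : w[0]'hlen = s := List.getElem_zero hlen
    set P : ℕ → Prop := fun i => plat red s (w.getD i s) with hP
    have hP0 : P 0 := by
      simp only [hP]
      rw [List.getD_eq_getElem _ _ hlen, h0]
      exact plat_refl red s
    set k := Nat.findGreatest P (w.length - 1) with hkdef
    have hk_le : k ≤ w.length - 1 := Nat.findGreatest_le _
    have hklen : k < w.length := by omega
    have hkP : P k := Nat.findGreatest_spec (Nat.zero_le _) hP0
    have hplat_k : plat red s (w[k]'hklen) := by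
      have := hkP
      simp only [hP] at this
      rwa [List.getD_eq_getElem _ _ hklen] at this
    have hmax : ∀ j (hj : j < w.length), k < j → ¬ plat red s (w[j]'hj) := by
      intro j hj hkj hpj
      have hne' : ¬ P j := Nat.findGreatest_is_greatest hkj (by omega)
      simp only [hP] at hne'
      rw [List.getD_eq_getElem _ _ hj] at hne'
      exact hne' hpj
    by_cases hcase : k = w.length - 1
    · -- whole target platform reachable by red path
      have hlast_idx : w.getLast hne = w[w.length - 1]'(by omega) := List.getLast_eq_getElem hne
      have hplat_last : plat red s (w.getLast hne) := by
        rw [hlast_idx]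
        have := hplat_k
        rwa [getElem_idx_congr w hcase hklen] at this
      obtain ⟨l, hlne, hlh, hll, hlc, hlm⟩ := exists_red_path hsymm hplat_last
      have hlhead : l.head hlne = s := by
        rw [List.head?_eq_head hlne] at hlh; exact Option.some.inj hlh
      have hllast : l.getLast hlne = w.getLast hne := by
        rw [List.getLast?_eq_getLast hlne] at hll; exact Option.some.inj hll
      refine ⟨l, hlne, hlhead, hllast, ?_, ?_, ?_⟩
      · intro x hx
        exact ⟨w.head hne, List.head_mem hne, plat_symm (hlm x hx)⟩
      · intro i h
        exact Or.inl (chain'_getElem hlc i h)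
      · intro i j m hij hjm hm hpl
        have h1 : plat red s (l[i]'(by omega)) := hlm _ (List.getElem_mem _)
        have h2 : plat red s (l[j]'(by omega)) := hlm _ (List.getElem_mem _)
        exact plat_trans (plat_symm h1) h2
    · -- k < w.length - 1
      have hk1 : k + 1 < w.length := by omega
      have hnotk1 : ¬ plat red s (w[k+1]'hk1) := hmax _ hk1 (by omega)
      have hblue : blue (w[k]'hklen) (w[k+1]'hk1) := by
        rcases hE k hk1 with hr | hb
        · exact absurd (plat_trans hplat_k (Relation.EqvGen.rel _ _ hr)) hnotk1
        · exact hb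
      set w2 := w.drop (k+1) with hw2def
      have hw2len : w2.length = w.length - (k+1) := List.length_drop
      have hw2ne : w2 ≠ [] := by
        intro hc; rw [hc] at hw2len; simp at hw2len; omega
      have hw2get : ∀ i (h : i < w2.length), w2[i]'h = w[k+1+i]'(by omega) := by
        intro i h
        exact List.getElem_drop
      have hE2 : Edges red blue w2 := by
        intro i h
        rcases hE (k+1+i) (by omega) with hr | hb
        · left; rw [hw2get i (by omega), hw2get (i+1) (by omega)]
          convert hr using 2 <;> omega
        · right; rw [hw2get i (by omega), hw2get (i+1) (by omega)]
          convert hb using 2 <;> omega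
      obtain ⟨w3, hne3, hh3, hl3, hm3, hg3, ho3⟩ := ih w2 (by omega) hw2ne hE2
      have hw2head : w2.head hw2ne = w[k+1]'hk1 := by
        rw [show w2.head hw2ne = w2[0]'(List.length_pos_iff.mpr hw2ne) from
          (List.getElem_zero _).symm, hw2get 0 (List.length_pos_iff.mpr hw2ne)]
      have hw2last : w2.getLast hw2ne = w.getLast hne := by
        rw [List.getLast_eq_getElem hw2ne, List.getLast_eq_getElem hne,
          hw2get (w2.length - 1) (by omega)]
        congr 1
        omega
      have h3head : w3.head hne3 = w[k+1]'hk1 := hh3.trans hw2head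
      have h3last : w3.getLast hne3 = w.getLast hne := hl3.trans hw2last
      have hnot2 : ∀ y ∈ w2, ¬ plat red s y := by
        intro y hy hpy
        obtain ⟨i, hi, rfl⟩ := List.mem_iff_getElem.mp hy
        rw [hw2get i hi] at hpy
        exact hmax _ (by omega) (by omega) hpy
      have hnot3 : ∀ x ∈ w3, ¬ plat red s x := by
        intro x hx hpx
        obtain ⟨y, hy, hxy⟩ := hm3 x hx
        exact hnot2 y hy (plat_trans hpx hxy)
      obtain ⟨l, hlne, hlh, hll, hlc, hlm⟩ := exists_red_path hsymm hplat_k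
      have hlhead : l.head hlne = s := by
        rw [List.head?_eq_head hlne] at hlh; exact Option.some.inj hlh
      have hllast : l.getLast hlne = w[k]'hklen := by
        rw [List.getLast?_eq_getLast hlne] at hll; exact Option.some.inj hll
      set L := l.length with hLdef
      have hLpos : 0 < L := List.length_pos_iff.mpr hlne
      have hwne' : l ++ w3 ≠ [] := by simp [hlne]
      have hgetl : ∀ i (h : i < L), (l ++ w3)[i]'(by simp; omega) = l[i]'h := by
        intro i h; exact List.getElem_append_left h
      have hgetr : ∀ i (h : L ≤ i) (h2 : i < (l ++ w3).length),
          (l ++ w3)[i]'h2 = w3[i - L]'(by simp at h2; omega) := by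
        intro i h h2; exact List.getElem_append_right h
      refine ⟨l ++ w3, hwne', ?_, ?_, ?_, ?_, ?_⟩
      · rw [show (l ++ w3).head hwne' = (l ++ w3)[0]'(by simp; omega) from
          (List.getElem_zero _).symm, hgetl 0 hLpos, List.getElem_zero, hlhead]
      · rw [List.getLast_append]
        simp [hne3, h3last]
      · intro x hx
        rcases List.mem_append.mp hx with hx | hx
        · exact ⟨w.head hne, List.head_mem hne, plat_symm (hlm x hx)⟩
        · obtain ⟨y, hy, hxy⟩ := hm3 x hx
          exact ⟨y, List.drop_subset _ _ hy, hxy⟩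
      · -- Good
        intro i h
        have hlen' : (l ++ w3).length = L + w3.length := by simp [hLdef]
        rcases lt_trichotomy (i+1) L with h1 | h1 | h1
        · left
          rw [hgetl i (by omega), hgetl (i+1) (by omega)]
          exact chain'_getElem hlc i (by omega)
        · right
          have hiL : i = L - 1 := by omega
          have e1 : (l ++ w3)[i]'(by omega) = w[k]'hklen := by
            rw [hgetl i (by omega)]
            rw [← hllast, List.getLast_eq_getElem hlne]
            congr 1
          have e2 : (l ++ w3)[i+1]'h = w[k+1]'hk1 := by
            rw [hgetr (i+1) (by omega) h]
            rw [getElem_idx_congr w3 (show i + 1 - L = 0 from by omega), List.getElem_zero]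
            exact h3head
          rw [e1, e2]
          refine ⟨hblue, ?_⟩
          intro x hx hpx
          have hxl : x ∈ l := by
            have : (l ++ w3).take (i+1) = l := by
              rw [h1, List.take_append]
              simp [hLdef]
            rwa [this] at hx
          exact hnotk1 (plat_trans (plat_symm (plat_symm (hlm x hxl))) hpx)
        · -- i ≥ L
          have hiL : L ≤ i := by omega
          have hjlt : (i - L) + 1 < w3.length := by simp at h; omega
          have e1 : (l ++ w3)[i]'(by omega) = w3[i - L]'(by omega) := hgetr i hiL (by omega)
          have e2 : (l ++ w3)[i+1]'h = w3[(i - L) + 1]'hjlt := by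
            rw [hgetr (i+1) (by omega) h]
            congr 1
            omega
          rcases hg3 (i - L) hjlt with hr | ⟨hb, hcond⟩
          · left; rw [e1, e2]; exact hr
          · right
            rw [e1, e2]
            refine ⟨hb, ?_⟩
            intro x hx hpx
            have : (l ++ w3).take (i+1) = l ++ w3.take (i + 1 - L) := by
              rw [List.take_append, List.take_of_length_le (by omega)]
            rw [this] at hx
            rcases List.mem_append.mp hx with hx | hx
            · exact hnot3 _ (List.getElem_mem hjlt) (plat_trans (hlm x hx) hpx)
            · have : x ∈ w3.take ((i - L) + 1) := by
                rw [show i + 1 - L = (i - L) + 1 from by omega] at hx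
                exact hx
              exact hcond x this hpx
      · -- VisitsPlatformsOnce
        intro i j m hij hjm hm hpl
        have hlen' : (l ++ w3).length = L + w3.length := by simp [hLdef]
        by_cases hiL : i < L
        · have hpi : plat red s ((l ++ w3)[i]'(by omega)) := by
            rw [hgetl i hiL]; exact hlm _ (List.getElem_mem _)
          by_cases hmL : m < L
          · have hpj : plat red s ((l ++ w3)[j]'(by omega)) := by
              rw [hgetl j (by omega)]; exact hlm _ (List.getElem_mem _)
            exact plat_trans (plat_symm hpi) hpj
          · exfalso
            have : (l ++ w3)[m]'hm = w3[m - L]'(by omega) := hgetr m (by omega) hm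
            apply hnot3 _ (List.getElem_mem (show m - L < w3.length from by omega))
            rw [← this]
            exact plat_trans hpi hpl
        · have hiL' : L ≤ i := by omega
          have hjL : L ≤ j := by omega
          have hmL : L ≤ m := by omega
          have e1 : (l ++ w3)[i]'(by omega) = w3[i - L]'(by omega) := hgetr i hiL' (by omega)
          have e2 : (l ++ w3)[j]'(by omega) = w3[j - L]'(by omega) := hgetr j hjL (by omega)
          have e3 : (l ++ w3)[m]'hm = w3[m - L]'(by omega) := hgetr m hmL hm
          rw [e1, e3] at hpl
          rw [e1, e2]
          have := ho3 (i - L) (j - L) (m - L) (by omega) (by omega) (by omega) hpl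
          exact this

end Stmt0Aux

/-- If a walk from `s` to `t` exists (red edges always traversable; blue edges
with arbitrary availability, but guaranteed available whenever the platform of
the target has not yet been visited), then a walk from `s` to `t` exists that
visits each platform at most once. -/
theorem stmt0 {V : Type*} (red blue : V → V → Prop) (hsymm : Symmetric red)
    (avail : List V → V → V → Prop)
    (havail : ∀ (hist : List V) (u v : V), blue u v →
      (∀ x ∈ hist, ¬ plat red x v) → avail hist u v)
    (s t : V) (w : List V) (hne : w ≠ [])
    (hhead : w.head hne = s) (hlast : w.getLast hne = t)
    (hwalk : IsWalk red blue avail w) :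
    ∃ (w' : List V) (hne' : w' ≠ []),
      w'.head hne' = s ∧ w'.getLast hne' = t ∧
      IsWalk red blue avail w' ∧ VisitsPlatformsOnce red w' := by
  have hE : Stmt0Aux.Edges red blue w := fun i h => (hwalk i h).imp id And.left
  obtain ⟨w', hne', hh, hl, _, hg, ho⟩ :=
    Stmt0Aux.key red blue hsymm w.length w le_rfl hne hE
  refine ⟨w', hne', hh.trans hhead, hl.trans hlast, ?_, ho⟩
  intro i h
  rcases hg i h with hr | ⟨hb, hcond⟩
  · exact Or.inl hr
  · exact Or.inr ⟨hb, havail _ _ _ hb hcond⟩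
end

section
/- Switch-hook platform invariance: in the switch-hook model with diamond blocks, if a platform (red-connected component) has never been visited by the agent, then all diamond blocks on that platform are in their initial positions; consequently, any blue edge (switch-hook move) into an unvisited platform that was available in the initial configuration remains available. -/
/-- One step of the switch-hook model. A state is `(agent position, diamond
block configuration)`. The agent may: walk along a red edge to an empty tile;
swap with an adjacent diamond block; or switch-hook with any diamond block,
swapping positions with it. -/
def SHStep {V : Type*} [DecidableEq V] (red : V → V → Prop) :
    V × (V → Bool) → V × (V → Bool) → Prop := fun a b =>
  (red a.1 b.1 ∧ a.2 b.1 = false ∧ b.2 = a.2) ∨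
  (red a.1 b.1 ∧ a.2 b.1 = true ∧
    b.2 = Function.update (Function.update a.2 b.1 false) a.1 true) ∨
  (a.2 b.1 = true ∧
    b.2 = Function.update (Function.update a.2 b.1 false) a.1 true)

/-- Switch-hook platform invariance: along any legal walk, the block
configuration on every platform never entered by the agent equals the initial
block configuration there; consequently, any switch-hook availability predicate
depending only on the blocks on the target's platform that held initially still
holds for moves into a never-visited platform. -/
theorem stmt12 {V : Type*} [DecidableEq V] (red : V → V → Prop)
    (hsymm : Symmetric red) (m : ℕ) (f : ℕ → V × (V → Bool))
    (hstep : ∀ k < m, SHStep red (f k) (f (k + 1)))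
    (avail : (V → Bool) → V → V → Prop)
    (havail : ∀ (b b' : V → Bool) (u v : V),
      (∀ x, plat red v x → b x = b' x) → (avail b u v ↔ avail b' u v)) :
    (∀ k ≤ m, ∀ x : V,
      (∀ j ≤ k, ¬ plat red (f j).1 x) → (f k).2 x = (f 0).2 x) ∧
    (∀ k ≤ m, ∀ u v : V,
      (∀ j ≤ k, ¬ plat red (f j).1 v) →
        avail (f 0).2 u v → avail (f k).2 u v) := by
  have key : ∀ k ≤ m, ∀ x : V,
      (∀ j ≤ k, ¬ plat red (f j).1 x) → (f k).2 x = (f 0).2 x := by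
    intro k
    induction k with
    | zero => intro _ x _; rfl
    | succ k ih =>
      intro hk x hx
      have hk' : k ≤ m := Nat.le_of_succ_le hk
      have ihx : (f k).2 x = (f 0).2 x :=
        ih hk' x (fun j hj => hx j (Nat.le_succ_of_le hj))
      have hx1 : x ≠ (f k).1 := by
        intro h; exact hx k (Nat.le_succ k) (h ▸ Relation.EqvGen.refl x)
      have hx2 : x ≠ (f (k+1)).1 := by
        intro h; exact hx (k+1) le_rfl (h ▸ Relation.EqvGen.refl x)
      have hs := hstep k (Nat.lt_of_succ_le hk)
      have : (f (k+1)).2 x = (f k).2 x := by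
        rcases hs with ⟨_, _, hb⟩ | ⟨_, _, hb⟩ | ⟨_, hb⟩ <;>
          simp [hb, Function.update_of_ne hx1, Function.update_of_ne hx2]
      rw [this, ihx]
  refine ⟨key, ?_⟩
  intro k hk u v hv h0
  refine (havail (f 0).2 (f k).2 u v ?_).mp h0
  intro x hx
  have hpx : ∀ j ≤ k, ¬ plat red (f j).1 x := by
    intro j hj hjx
    exact hv j hj (Relation.EqvGen.trans _ _ _ hjx (Relation.EqvGen.symm _ _ hx))
  exact (key k hk x hpx).symm
end
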